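/- arXiv:1905.12909 — 4 statements merged into one kernel-verified Lean document; each statement's English description precedes it below -/
import Mathlib

section
/- Let K ≥ 1, n ≥ 1, let F be a K×n real matrix with strictly positive entries whose columns each lie in the probability simplex Δ_K, let z ∈ Δ_K have strictly positive entries, let 0 < α < 1 and ε > 0, and set C = -log F entrywise, M = F^{1/ε} entrywise and τ = (1 + αε/(1-α))^{-1}. Suppose U* minimizes the objective G(U) = (α/n)(⟨C,U⟩ - ε H(U)) + (1-α) KL(U·1_n/n ∣ z) over the set of K×n matrices with nonnegative entries and each column in Δ_K, and suppose U* has strictly positive entries. Then there exist vectors a ∈ ℝ^K and b ∈ ℝ^n with strictly positive entries such that U* = diag(a)·M·diag(b), a = (n z ⊘ (M b))^τ (entrywise), and b = 1_n ⊘ (Mᵀ a) (entrywise). -/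
/-- Frobenius inner product of two `K × n` real matrices. -/
noncomputable def frob {K n : ℕ} (C U : Fin K → Fin n → ℝ) : ℝ :=
  ∑ i, ∑ j, C i j * U i j

/-- Entropy of a nonnegative matrix, `H(U) = -∑ U_ij (log U_ij - 1)`
(the convention `0 · (log 0 - 1) = 0` holds since `Real.log 0 = 0`). -/
noncomputable def matEnt {K n : ℕ} (U : Fin K → Fin n → ℝ) : ℝ :=
  -∑ i, ∑ j, U i j * (Real.log (U i j) - 1)

/-- Generalized Kullback-Leibler divergence between nonnegative vectors
(the convention `0 · log 0 = 0` holds since `Real.log 0 = 0`). -/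
noncomputable def klv {K : ℕ} (a b : Fin K → ℝ) : ℝ :=
  ∑ i, (a i * Real.log (a i / b i) - a i + b i)

/-- The entropic unbalanced OT objective
`G(U) = (α/n)(⟨C,U⟩ - ε H(U)) + (1-α) KL(U·1_n/n ∣ z)`. -/
noncomputable def objG {K n : ℕ} (C : Fin K → Fin n → ℝ) (z : Fin K → ℝ) (α ε : ℝ)
    (U : Fin K → Fin n → ℝ) : ℝ :=
  α / n * (frob C U - ε * matEnt U) + (1 - α) * klv (fun i => (∑ j, U i j) / n) z

/-- `U` is a nonnegative matrix each of whose columns lies in the simplex `Δ_K`. -/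
def colSimplex {K n : ℕ} (U : Fin K → Fin n → ℝ) : Prop :=
  (∀ i j, 0 ≤ U i j) ∧ ∀ j, ∑ i, U i j = 1

/-!
Moving mass between two entries of one column, `U + t (e_{ij} - e_{i'j})`, stays feasible
for small `t` because `U*` is positive, so the derivative of `G` in that direction vanishes:
the gradient `α/n (C + ε log U) + (1-α)/n log (r ⊘ nz)`, with `r = U·1_n`, is constant down
each column. Exponentiating, `U_ij / (a_i M_ij)` depends only on `j` when
`a = (nz ⊘ r)^s`, `s = (1-α)/(αε)`, and the column constraint forces it to be
`b_j = 1 / (Mᵀa)_j`. Then `r = a ⊙ Mb`, and `a = (nz ⊘ (a ⊙ Mb))^s` solves to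
`a = (nz ⊘ Mb)^{s/(1+s)}` with `s/(1+s) = τ`.
-/

open Real Filter Topology

lemma HasDerivAt.mul_log_div_sub_one {f : ℝ → ℝ} {f' x c : ℝ} (hf : HasDerivAt f f' x)
    (hfx : f x ≠ 0) (hc : c ≠ 0) :
    HasDerivAt (fun t => f t * (Real.log (f t / c) - 1)) (f' * Real.log (f x / c)) x := by
  refine (hf.fun_mul (((hf.div_const c).log (div_ne_zero hfx hc)).sub_const 1)).congr_deriv ?_
  field_simp
  ring

section Derivatives

variable {K n : ℕ} {x : ℝ}

lemma frob_hasDerivAt (C : Fin K → Fin n → ℝ) {P : ℝ → Fin K → Fin n → ℝ}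
    {P' : Fin K → Fin n → ℝ} (hP : ∀ i j, HasDerivAt (fun t => P t i j) (P' i j) x) :
    HasDerivAt (fun t => frob C (P t)) (frob C P') x :=
  HasDerivAt.fun_sum fun i _ => HasDerivAt.fun_sum fun j _ => (hP i j).const_mul _

lemma matEnt_hasDerivAt {P : ℝ → Fin K → Fin n → ℝ} {P' : Fin K → Fin n → ℝ}
    (hP : ∀ i j, HasDerivAt (fun t => P t i j) (P' i j) x) (hPx : ∀ i j, P x i j ≠ 0) :
    HasDerivAt (fun t => matEnt (P t)) (-∑ i, ∑ j, P' i j * log (P x i j)) x :=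
  HasDerivAt.neg <| HasDerivAt.fun_sum fun i _ => HasDerivAt.fun_sum fun j _ => by
    simpa using (hP i j).mul_log_div_sub_one (hPx i j) one_ne_zero

lemma klv_hasDerivAt {p : ℝ → Fin K → ℝ} {p' b : Fin K → ℝ}
    (hp : ∀ i, HasDerivAt (fun t => p t i) (p' i) x) (hpx : ∀ i, p x i ≠ 0)
    (hb : ∀ i, b i ≠ 0) :
    HasDerivAt (fun t => klv (p t) b) (∑ i, p' i * log (p x i / b i)) x :=
  HasDerivAt.fun_sum fun i _ => by
    convert ((hp i).mul_log_div_sub_one (hpx i) (hb i)).add_const (b i) using 1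
    ext t
    ring

end Derivatives

noncomputable def objGGrad {K n : ℕ} (C : Fin K → Fin n → ℝ) (z : Fin K → ℝ) (α ε : ℝ)
    (U : Fin K → Fin n → ℝ) : Fin K → Fin n → ℝ :=
  fun i j => α / n * (C i j + ε * log (U i j)) + (1 - α) / n * log ((∑ j, U i j) / n / z i)

lemma objG_hasDerivAt {K n : ℕ} (hn : 0 < n) (C : Fin K → Fin n → ℝ) {z : Fin K → ℝ}
    (hz : ∀ i, 0 < z i) (α ε : ℝ) {U : Fin K → Fin n → ℝ} (hU : ∀ i j, 0 < U i j)
    (D : Fin K → Fin n → ℝ) :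
    HasDerivAt (fun t : ℝ => objG C z α ε (U + t • D)) (frob (objGGrad C z α ε U) D) 0 := by
  have hP : ∀ i j, HasDerivAt (fun t : ℝ => (U + t • D) i j) (D i j) 0 := fun i j => by
    simpa using ((hasDerivAt_id (0 : ℝ)).mul_const (D i j)).const_add (U i j)
  have hrow : ∀ i, HasDerivAt (fun t : ℝ => (∑ j, (U + t • D) i j) / n) ((∑ j, D i j) / n) 0 :=
    fun i => (HasDerivAt.fun_sum fun j _ => hP i j).div_const _
  have hrow_pos : ∀ i, (∑ j, (U + (0 : ℝ) • D) i j) / n ≠ 0 := fun i => by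
    have : Nonempty (Fin n) := ⟨⟨0, hn⟩⟩
    simp only [zero_smul, add_zero]
    exact (div_pos (Finset.sum_pos (fun j _ => hU i j) Finset.univ_nonempty)
      (Nat.cast_pos.2 hn)).ne'
  refine ((((frob_hasDerivAt C hP).fun_sub ((matEnt_hasDerivAt hP fun i j => by
    simpa using (hU i j).ne').const_mul ε)).const_mul (α / n)).fun_add
    ((klv_hasDerivAt hrow hrow_pos fun i => (hz i).ne').const_mul (1 - α))).congr_deriv ?_
  simp only [frob, objGGrad, zero_smul, add_zero, Pi.add_apply, Pi.zero_apply, mul_neg,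
    sub_neg_eq_add, Finset.sum_div, Finset.sum_mul, Finset.mul_sum, ← Finset.sum_add_distrib]
  refine Finset.sum_congr rfl fun i _ => Finset.sum_congr rfl fun j _ => ?_
  ring

section Stationarity

variable {K n : ℕ} {U D : Fin K → Fin n → ℝ}

lemma colSimplex_eventually_add_smul (hU : colSimplex U) (hpos : ∀ i j, 0 < U i j)
    (hD : ∀ j, ∑ i, D i j = 0) : ∀ᶠ t in 𝓝 (0 : ℝ), colSimplex (U + t • D) := by
  have hnonneg : ∀ᶠ t in 𝓝 (0 : ℝ), ∀ i j, 0 ≤ (U + t • D) i j := by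
    refine Filter.eventually_all.2 fun i => Filter.eventually_all.2 fun j => ?_
    have hcont : Continuous fun t : ℝ => (U + t • D) i j := by
      simp only [Pi.add_apply, Pi.smul_apply, smul_eq_mul]
      fun_prop
    filter_upwards [(hcont.tendsto 0).eventually (lt_mem_nhds (by simpa using hpos i j))]
      with t ht using ht.le
  filter_upwards [hnonneg] with t ht
  refine ⟨ht, fun j => ?_⟩
  simp [Finset.sum_add_distrib, ← Finset.mul_sum, hD j, hU.2 j]

lemma frob_eq_zero_of_isMinOn {f : (Fin K → Fin n → ℝ) → ℝ} {G : Fin K → Fin n → ℝ}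
    (hU : colSimplex U) (hpos : ∀ i j, 0 < U i j) (hmin : IsMinOn f {V | colSimplex V} U)
    (hD : ∀ j, ∑ i, D i j = 0) (hderiv : HasDerivAt (fun t : ℝ => f (U + t • D)) (frob G D) 0) :
    frob G D = 0 := by
  refine IsLocalMin.hasDerivAt_eq_zero ?_ hderiv
  filter_upwards [colSimplex_eventually_add_smul hU hpos hD] with t ht
  simpa using isMinOn_iff.1 hmin _ ht

lemma grad_eq_of_isMinOn {f : (Fin K → Fin n → ℝ) → ℝ} {G : Fin K → Fin n → ℝ}
    (hU : colSimplex U) (hpos : ∀ i j, 0 < U i j) (hmin : IsMinOn f {V | colSimplex V} U)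
    (hderiv : ∀ D, HasDerivAt (fun t : ℝ => f (U + t • D)) (frob G D) 0) (j : Fin n)
    (i i' : Fin K) : G i j = G i' j := by
  set D : Fin K → Fin n → ℝ := Pi.single i (Pi.single j 1) - Pi.single i' (Pi.single j 1)
  have hD : ∀ j', ∑ k, D k j' = 0 := fun j' => by
    simp [D, Pi.single_apply, ite_apply, Finset.sum_sub_distrib]
  simpa [frob, D, Pi.single_apply, ite_apply, mul_sub, Finset.sum_sub_distrib, sub_eq_zero]
    using frob_eq_zero_of_isMinOn hU hpos hmin hD (hderiv D)

end Stationarity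

lemma eq_mul_inv_sum_of_div_eq {ι κ : Type*} [Fintype ι] {U A : ι → κ → ℝ}
    (hcol : ∀ j, ∑ i, U i j = 1) (hA : ∀ i j, 0 < A i j)
    (hratio : ∀ j i i', U i j / A i j = U i' j / A i' j) (i : ι) (j : κ) :
    U i j = A i j * (∑ i', A i' j)⁻¹ := by
  have hsum : U i j / A i j * ∑ i', A i' j = 1 := by
    rw [Finset.mul_sum, ← hcol j]
    exact Finset.sum_congr rfl fun i' _ => by rw [hratio j i i', div_mul_cancel₀ _ (hA i' j).ne']
  have hpos : 0 < ∑ i', A i' j := Finset.sum_pos (fun i' _ => hA i' j) ⟨i, Finset.mem_univ i⟩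
  rw [div_mul_eq_mul_div, div_eq_one_iff_eq (hA i j).ne'] at hsum
  field_simp
  exact hsum

lemma Real.eq_rpow_of_eq_div_mul_rpow {a q c s : ℝ} (ha : 0 < a) (hq : 0 < q) (hc : 0 < c)
    (hs : 0 < s) (h : a = (c / (a * q)) ^ s) : a = (c / q) ^ (1 + s⁻¹)⁻¹ := by
  have hlog := congrArg log h
  rw [log_rpow (by positivity), log_div hc.ne' (by positivity), log_mul ha.ne' hq.ne'] at hlog
  rw [← exp_log ha, rpow_def_of_pos (div_pos hc hq), log_div hc.ne' hq.ne']
  congr 1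
  field_simp
  linarith

lemma div_rpow_mul_rpow_eq_exp_objGGrad {K n : ℕ} (hn : 0 < n) {F U : Fin K → Fin n → ℝ}
    {z : Fin K → ℝ} (hF : ∀ i j, 0 < F i j) (hU : ∀ i j, 0 < U i j) (hz : ∀ i, 0 < z i)
    {α ε : ℝ} (hα : α ≠ 0) (hε : ε ≠ 0) (i : Fin K) (j : Fin n) :
    U i j / (((n : ℝ) * z i / ∑ j, U i j) ^ ((1 - α) / (α * ε)) * F i j ^ (1 / ε)) =
      exp (n / (α * ε) * objGGrad (fun i j => -log (F i j)) z α ε U i j) := by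
  have hr : 0 < ∑ j, U i j :=
    Finset.sum_pos (fun j _ => hU i j) ⟨j, Finset.mem_univ j⟩
  have hnR : (0 : ℝ) < n := Nat.cast_pos.2 hn
  have := hU i j; have := hF i j; have := hz i
  rw [← exp_log (x := U i j / _) (by positivity)]
  congr 1
  simp only [objGGrad]
  rw [log_div (hU i j).ne' (by positivity), log_mul (by positivity) (by positivity),
    log_rpow (by positivity), log_rpow (hF i j), log_div (by positivity) hr.ne',
    log_div (by positivity) (hz i).ne', log_div hr.ne' hnR.ne', log_mul hnR.ne' (hz i).ne']
  field_simp
  ring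

theorem sinkhorn_fixed_point_of_minimizer_general
    {K n : ℕ} (hn : 1 ≤ n)
    (F : Fin K → Fin n → ℝ) (hFpos : ∀ i j, 0 < F i j)
    (z : Fin K → ℝ) (hzpos : ∀ i, 0 < z i)
    (α ε : ℝ) (hα0 : 0 < α) (hα1 : α < 1) (hε : 0 < ε)
    (C : Fin K → Fin n → ℝ) (hC : ∀ i j, C i j = -Real.log (F i j))
    (M : Fin K → Fin n → ℝ) (hM : ∀ i j, M i j = F i j ^ (1 / ε))
    (τ : ℝ) (hτ : τ = (1 + α * ε / (1 - α))⁻¹)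
    (Ustar : Fin K → Fin n → ℝ)
    (hUfeas : colSimplex Ustar)
    (hUpos : ∀ i j, 0 < Ustar i j)
    (hUmin : ∀ V : Fin K → Fin n → ℝ, colSimplex V →
      objG C z α ε Ustar ≤ objG C z α ε V) :
    ∃ (a : Fin K → ℝ) (b : Fin n → ℝ),
      (∀ i, 0 < a i) ∧ (∀ j, 0 < b j) ∧
      (∀ i j, Ustar i j = a i * M i j * b j) ∧
      (∀ i, a i = ((n : ℝ) * z i / (∑ j, M i j * b j)) ^ τ) ∧
      (∀ j, b j = (∑ i, M i j * a i)⁻¹) := by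
  obtain rfl : C = fun i j => -log (F i j) := funext fun i => funext (hC i)
  obtain rfl : M = fun i j => F i j ^ (1 / ε) := funext fun i => funext (hM i)
  beta_reduce
  have hs : 0 < (1 - α) / (α * ε) := div_pos (by linarith) (mul_pos hα0 hε)
  set a : Fin K → ℝ := fun i => ((n : ℝ) * z i / ∑ j, Ustar i j) ^ ((1 - α) / (α * ε))
  set b : Fin n → ℝ := fun j => (∑ i, F i j ^ (1 / ε) * a i)⁻¹
  have hr : ∀ i, 0 < ∑ j, Ustar i j := fun i =>
    Finset.sum_pos (fun j _ => hUpos i j) ⟨⟨0, hn⟩, Finset.mem_univ _⟩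
  have ha : ∀ i, 0 < a i := fun i => by have := hzpos i; have := hr i; positivity
  have hMa : ∀ i j, 0 < a i * F i j ^ (1 / ε) := fun i j =>
    mul_pos (ha i) (rpow_pos_of_pos (hFpos i j) _)
  have hstat := grad_eq_of_isMinOn hUfeas hUpos (isMinOn_iff.2 hUmin)
    (objG_hasDerivAt hn _ hzpos α ε hUpos)
  have hfactor : ∀ i j, Ustar i j = a i * F i j ^ (1 / ε) * b j := fun i j => by
    refine (eq_mul_inv_sum_of_div_eq hUfeas.2 hMa (fun j i i' => ?_) i j).trans ?_
    · simp only [a, div_rpow_mul_rpow_eq_exp_objGGrad hn hFpos hUpos hzpos hα0.ne' hε.ne',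
        hstat j i i']
    · simp only [b, mul_comm]
  have hb : ∀ j, 0 < b j := fun j => inv_pos.2 <| Finset.sum_pos (fun i _ => by
    rw [mul_comm]; exact hMa i j) (Finset.nonempty_of_sum_ne_zero (hUfeas.2 j ▸ one_ne_zero))
  refine ⟨a, b, ha, hb, hfactor, fun i => ?_, fun j => rfl⟩
  have hrow : ∑ j, Ustar i j = a i * ∑ j, F i j ^ (1 / ε) * b j := by
    simp only [hfactor, Finset.mul_sum, mul_assoc]
  have hai : a i = ((n : ℝ) * z i / (a i * ∑ j, F i j ^ (1 / ε) * b j)) ^ ((1 - α) / (α * ε)) := by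
    rw [← hrow]
  rw [hτ, ← inv_div (1 - α) (α * ε)]
  refine eq_rpow_of_eq_div_mul_rpow (ha i) ?_ (by have := hzpos i; positivity) hs hai
  exact Finset.sum_pos (fun j _ => by have := hFpos i j; have := hb j; positivity)
    ⟨⟨0, hn⟩, Finset.mem_univ _⟩

/-- Proposition 1: the minimizer of the entropic unbalanced OT objective has the form
`U* = diag(a) M diag(b)` with `a = (nz ⊘ Mb)^τ` and `b = 1_n ⊘ Mᵀa`. -/
theorem sinkhorn_fixed_point_of_minimizer
    {K n : ℕ} (hK : 1 ≤ K) (hn : 1 ≤ n)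
    (F : Fin K → Fin n → ℝ) (hFpos : ∀ i j, 0 < F i j)
    (hFcol : ∀ j, ∑ i, F i j = 1)
    (z : Fin K → ℝ) (hzpos : ∀ i, 0 < z i) (hzsum : ∑ i, z i = 1)
    (α ε : ℝ) (hα0 : 0 < α) (hα1 : α < 1) (hε : 0 < ε)
    (C : Fin K → Fin n → ℝ) (hC : ∀ i j, C i j = -Real.log (F i j))
    (M : Fin K → Fin n → ℝ) (hM : ∀ i j, M i j = F i j ^ (1 / ε))
    (τ : ℝ) (hτ : τ = (1 + α * ε / (1 - α))⁻¹)
    (Ustar : Fin K → Fin n → ℝ)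
    (hUfeas : colSimplex Ustar)
    (hUpos : ∀ i j, 0 < Ustar i j)
    (hUmin : ∀ V : Fin K → Fin n → ℝ, colSimplex V →
      objG C z α ε Ustar ≤ objG C z α ε V) :
    ∃ (a : Fin K → ℝ) (b : Fin n → ℝ),
      (∀ i, 0 < a i) ∧ (∀ j, 0 < b j) ∧
      (∀ i j, Ustar i j = a i * M i j * b j) ∧
      (∀ i, a i = ((n : ℝ) * z i / (∑ j, M i j * b j)) ^ τ) ∧
      (∀ j, b j = (∑ i, M i j * a i)⁻¹) :=
  sinkhorn_fixed_point_of_minimizer_general hn F hFpos z hzpos α ε hα0 hα1 hε C hC M hM τ hτ Ustar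
    hUfeas hUpos hUmin
end

section
/- Let K ≥ 1, n ≥ 1, let F be a K×n real matrix with strictly positive entries whose columns each lie in Δ_K, let z ∈ Δ_K have strictly positive entries, let 0 < α < 1 and ε > 0, and set C = -log F entrywise. Suppose U* has strictly positive entries, each column of U* lies in Δ_K, and U* minimizes G(U) = (α/n)(⟨C,U⟩ - ε H(U)) + (1-α) KL(U·1_n/n ∣ z) over all nonnegative K×n matrices with columns in Δ_K. Then there exists λ ∈ ℝ^n such that for all i ∈ {1,…,K} and j ∈ {1,…,n}: U*_{ij} = exp(-C_{ij}/ε) · (n z_i / (U*·1_n)_i)^{(1-α)/(αε)} · exp(-n λ_j/(αε)). -/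
/-! The minimizer is interior, so moving mass `t` from entry `(i₂, j)` to entry `(i₁, j)` keeps
`U*` feasible for small `|t|`, and the derivative of `G` at `t = 0` along this line must vanish.
That derivative is `∂G/∂U_{i₁ j} - ∂G/∂U_{i₂ j}`, hence each column of the gradient
`∂G/∂U_ij = (α/n)(C_ij + ε log U_ij) + ((1-α)/n) log((U·1_n)_i / (n z_i))` is constant, equal
to `-λ_j` say, and solving this equation for `U_ij` gives the claimed form. -/

open Finset Filter Topology

section

variable {K n : ℕ}

lemma hasDerivAt_mul_log_sub_one {x : ℝ} (hx : x ≠ 0) :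
    HasDerivAt (fun x => x * (Real.log x - 1)) (Real.log x) x := by
  simpa [mul_sub] using (Real.hasDerivAt_mul_log hx).fun_sub (hasDerivAt_id' x)

lemma hasDerivAt_mul_log_div_sub_add {a b : ℝ} (ha : a ≠ 0) (hb : b ≠ 0) :
    HasDerivAt (fun x => x * Real.log (x / b) - x + b) (Real.log (a / b)) a := by
  refine ((((hasDerivAt_id' a).fun_mul (((hasDerivAt_id' a).div_const b).log
    (div_ne_zero ha hb))).fun_sub (hasDerivAt_id' a)).add_const b).congr_deriv ?_
  field_simp
  ring

lemma hasDerivAt_frob_add_smul (C U d : Fin K → Fin n → ℝ) :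
    HasDerivAt (fun t : ℝ => frob C (U + t • d)) (frob C d) 0 := by
  simpa [frob] using HasDerivAt.fun_sum fun i _ => HasDerivAt.fun_sum fun j _ =>
    ((hasDerivAt_mul_const (d i j)).const_add (U i j)).const_mul (C i j)

lemma hasDerivAt_matEnt_add_smul {U : Fin K → Fin n → ℝ} (hU : ∀ i j, U i j ≠ 0)
    (d : Fin K → Fin n → ℝ) :
    HasDerivAt (fun t : ℝ => matEnt (U + t • d)) (-frob (fun i j => Real.log (U i j)) d) 0 := by
  simpa [matEnt, frob] using (HasDerivAt.fun_sum fun i _ => HasDerivAt.fun_sum fun j _ =>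
    (hasDerivAt_mul_log_sub_one (hU i j)).comp_of_eq 0
      ((hasDerivAt_mul_const (d i j)).const_add (U i j)) (by simp)).fun_neg

lemma hasDerivAt_klv_add_smul {a z : Fin K → ℝ} (ha : ∀ i, a i ≠ 0) (hz : ∀ i, z i ≠ 0)
    (δ : Fin K → ℝ) :
    HasDerivAt (fun t : ℝ => klv (a + t • δ) z) (∑ i, Real.log (a i / z i) * δ i) 0 := by
  simpa [klv] using HasDerivAt.fun_sum fun i _ =>
    (hasDerivAt_mul_log_div_sub_add (ha i) (hz i)).comp_of_eq 0
      ((hasDerivAt_mul_const (δ i)).const_add (a i)) (by simp)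

noncomputable def objGrad (C : Fin K → Fin n → ℝ) (z : Fin K → ℝ) (α ε : ℝ)
    (U : Fin K → Fin n → ℝ) : Fin K → Fin n → ℝ :=
  fun i j => α / n * (C i j + ε * Real.log (U i j))
    + (1 - α) / n * Real.log ((∑ j', U i j') / n / z i)

lemma hasDerivAt_objG_add_smul {C U : Fin K → Fin n → ℝ} {z : Fin K → ℝ} (α ε : ℝ)
    (hn : 0 < n) (hU : ∀ i j, 0 < U i j) (hz : ∀ i, z i ≠ 0) (d : Fin K → Fin n → ℝ) :
    HasDerivAt (fun t : ℝ => objG C z α ε (U + t • d)) (frob (objGrad C z α ε U) d) 0 := by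
  have hrow : ∀ t : ℝ, (fun i => (∑ j, (U + t • d) i j) / n)
      = (fun i => (∑ j, U i j) / n) + t • fun i => ∑ j, d i j / n := by
    intro t; funext i; simp [sum_add_distrib, mul_sum, add_div, sum_div, mul_div_assoc]
  have hmean : ∀ i, (∑ j, U i j) / n ≠ 0 := fun i =>
    (div_pos (sum_pos (fun j _ => hU i j) ⟨⟨0, hn⟩, mem_univ _⟩) (by exact_mod_cast hn)).ne'
  have hent := (hasDerivAt_matEnt_add_smul (fun i j => (hU i j).ne') d).const_mul ε
  have hkl := (hasDerivAt_klv_add_smul hmean hz fun i => ∑ j, d i j / n).const_mul (1 - α)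
  have hobj := (((hasDerivAt_frob_add_smul C U d).fun_sub hent).const_mul (α / n)).fun_add hkl
  simp only [← hrow] at hobj
  refine hobj.congr_deriv ?_
  simp only [frob, objGrad, mul_sum, ← sum_neg_distrib, ← sum_sub_distrib, ← sum_add_distrib]
  exact sum_congr rfl fun i _ => sum_congr rfl fun j _ => by ring

lemma eventually_colSimplex_add_smul {U d : Fin K → Fin n → ℝ} (hU : colSimplex U)
    (hpos : ∀ i j, 0 < U i j) (hd : ∀ j, ∑ i, d i j = 0) :
    ∀ᶠ t in 𝓝 (0 : ℝ), colSimplex (U + t • d) := by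
  have hentries : ∀ᶠ t in 𝓝 (0 : ℝ), ∀ i j, 0 < U i j + t * d i j :=
    eventually_all.2 fun i => eventually_all.2 fun j =>
      ((continuous_const.add (continuous_id.mul continuous_const)).tendsto' 0 (U i j)
        (by simp)).eventually (lt_mem_nhds (hpos i j))
  filter_upwards [hentries] with t ht
  refine ⟨fun i j => (ht i j).le, fun j => ?_⟩
  simp [sum_add_distrib, ← mul_sum, hd, hU.2]

lemma hasDerivAt_eq_zero_of_isMinOn_colSimplex {f : (Fin K → Fin n → ℝ) → ℝ}
    {U d : Fin K → Fin n → ℝ} {f' : ℝ} (hmin : IsMinOn f {V | colSimplex V} U)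
    (hU : colSimplex U) (hpos : ∀ i j, 0 < U i j) (hd : ∀ j, ∑ i, d i j = 0)
    (hf : HasDerivAt (fun t : ℝ => f (U + t • d)) f' 0) : f' = 0 := by
  refine IsLocalMin.hasDerivAt_eq_zero ?_ hf
  filter_upwards [eventually_colSimplex_add_smul hU hpos hd] with t ht
  simpa using isMinOn_iff.1 hmin _ ht

def colTransfer (i₁ i₂ : Fin K) (j : Fin n) : Fin K → Fin n → ℝ :=
  Pi.single i₁ (Pi.single j 1) - Pi.single i₂ (Pi.single j 1)

lemma sum_colTransfer (i₁ i₂ : Fin K) (j j' : Fin n) : ∑ i, colTransfer i₁ i₂ j i j' = 0 := by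
  simp [colTransfer, sum_sub_distrib, Pi.single_apply, ite_apply]

lemma frob_colTransfer (g : Fin K → Fin n → ℝ) (i₁ i₂ : Fin K) (j : Fin n) :
    frob g (colTransfer i₁ i₂ j) = g i₁ j - g i₂ j := by
  simp [frob, colTransfer, mul_sub, sum_sub_distrib, Pi.single_apply, ite_apply]

lemma objGrad_eq_of_isMinOn {C U : Fin K → Fin n → ℝ} {z : Fin K → ℝ} {α ε : ℝ}
    (hz : ∀ i, z i ≠ 0) (hmin : IsMinOn (objG C z α ε) {V | colSimplex V} U)
    (hU : colSimplex U) (hpos : ∀ i j, 0 < U i j) (i₁ i₂ : Fin K) (j : Fin n) :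
    objGrad C z α ε U i₁ j = objGrad C z α ε U i₂ j := by
  have h := hasDerivAt_eq_zero_of_isMinOn_colSimplex hmin hU hpos (sum_colTransfer i₁ i₂ j)
    (hasDerivAt_objG_add_smul α ε j.pos hpos hz _)
  rwa [frob_colTransfer, sub_eq_zero] at h

lemma eq_exp_of_objGrad_add_eq_zero {C U : Fin K → Fin n → ℝ} {z : Fin K → ℝ} {α ε lam : ℝ}
    {i : Fin K} {j : Fin n} (hα : α ≠ 0) (hε : ε ≠ 0) (hU : ∀ j, 0 < U i j) (hz : 0 < z i)
    (h : objGrad C z α ε U i j + lam = 0) :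
    U i j = Real.exp (-C i j / ε) * ((n : ℝ) * z i / ∑ j', U i j') ^ ((1 - α) / (α * ε))
      * Real.exp (-((n : ℝ) * lam) / (α * ε)) := by
  have hS : 0 < ∑ j', U i j' := sum_pos (fun j' _ => hU j') ⟨j, mem_univ _⟩
  have hn : (0 : ℝ) < n := by exact_mod_cast j.pos
  have hlog : Real.log (n * z i / ∑ j', U i j') = -Real.log ((∑ j', U i j') / n / z i) := by
    rw [← Real.log_inv]
    congr 1
    field_simp
  rw [Real.rpow_def_of_pos (by positivity), hlog, ← Real.exp_add, ← Real.exp_add]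
  conv_lhs => rw [← Real.exp_log (hU j)]
  congr 1
  simp only [objGrad] at h
  field_simp
  field_simp at h
  linear_combination h

lemma exists_forall_eq_of_forall_eq {ι κ β : Type*} [Nonempty β] {f : ι → κ → β}
    (h : ∀ i i' j, f i j = f i' j) : ∃ c : κ → β, ∀ i j, f i j = c j := by
  rcases isEmpty_or_nonempty ι with hι | ⟨⟨i₀⟩⟩
  · exact ⟨fun _ => Classical.arbitrary β, fun i => isEmptyElim i⟩
  · exact ⟨f i₀, fun i j => h i i₀ j⟩

end

theorem lagrange_form_of_minimizer_general
    {K n : ℕ}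
    (z : Fin K → ℝ) (hzpos : ∀ i, 0 < z i)
    (α ε : ℝ) (hα0 : 0 < α) (hε : 0 < ε)
    (C : Fin K → Fin n → ℝ)
    (Ustar : Fin K → Fin n → ℝ)
    (hUpos : ∀ i j, 0 < Ustar i j)
    (hUfeas : colSimplex Ustar)
    (hUmin : ∀ V : Fin K → Fin n → ℝ, colSimplex V →
      objG C z α ε Ustar ≤ objG C z α ε V) :
    ∃ lam : Fin n → ℝ, ∀ i j,
      Ustar i j = Real.exp (-C i j / ε)
        * ((n : ℝ) * z i / (∑ j', Ustar i j')) ^ ((1 - α) / (α * ε))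
        * Real.exp (-((n : ℝ) * lam j) / (α * ε)) := by
  obtain ⟨c, hc⟩ := exists_forall_eq_of_forall_eq
    (objGrad_eq_of_isMinOn (fun i => (hzpos i).ne') (isMinOn_iff.2 hUmin) hUfeas hUpos)
  exact ⟨-c, fun i j => eq_exp_of_objGrad_add_eq_zero hα0.ne' hε.ne' (hUpos i) (hzpos i)
    (by simp [hc i j])⟩

/-- First-order (Lagrangian stationarity) characterization of the interior minimizer:
there exist multipliers `λ ∈ ℝ^n` such that
`U*_ij = exp(-C_ij/ε) · (n z_i / (U* 1_n)_i)^((1-α)/(αε)) · exp(-n λ_j/(αε))`. -/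
theorem lagrange_form_of_minimizer
    {K n : ℕ} (hK : 1 ≤ K) (hn : 1 ≤ n)
    (F : Fin K → Fin n → ℝ) (hFpos : ∀ i j, 0 < F i j)
    (hFcol : ∀ j, ∑ i, F i j = 1)
    (z : Fin K → ℝ) (hzpos : ∀ i, 0 < z i) (hzsum : ∑ i, z i = 1)
    (α ε : ℝ) (hα0 : 0 < α) (hα1 : α < 1) (hε : 0 < ε)
    (C : Fin K → Fin n → ℝ) (hC : ∀ i j, C i j = -Real.log (F i j))
    (Ustar : Fin K → Fin n → ℝ)
    (hUpos : ∀ i j, 0 < Ustar i j)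
    (hUfeas : colSimplex Ustar)
    (hUmin : ∀ V : Fin K → Fin n → ℝ, colSimplex V →
      objG C z α ε Ustar ≤ objG C z α ε V) :
    ∃ lam : Fin n → ℝ, ∀ i j,
      Ustar i j = Real.exp (-C i j / ε)
        * ((n : ℝ) * z i / (∑ j', Ustar i j')) ^ ((1 - α) / (α * ε))
        * Real.exp (-((n : ℝ) * lam j) / (α * ε)) :=
  lagrange_form_of_minimizer_general z hzpos α ε hα0 hε C Ustar hUpos hUfeas hUmin
end

section
/- Let K ≥ 1, n ≥ 1, let C be a real K×n matrix, let z ∈ Δ_K have strictly positive entries, and let 0 < α < 1 and ε > 0. Then the unique minimizer U* of G(U) = (α/n)(⟨C,U⟩ - ε H(U)) + (1-α) KL(U·1_n/n ∣ z) over the set of nonnegative K×n matrices whose columns lie in Δ_K has strictly positive entries. -/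
/-- The set of nonnegative `K × n` matrices whose columns lie in `Δ_K`. -/
def colSimplexSet (K n : ℕ) : Set (Fin K → Fin n → ℝ) :=
  {U | (∀ i j, 0 ≤ U i j) ∧ ∀ j, ∑ i, U i j = 1}

/-! If `U* i j = 0`, some entry `U* i₁ j` of the same column is positive. Moving mass `t`
from `(i₁, j)` to `(i, j)` keeps the matrix feasible, and since `x ↦ x log (x / c) - x` lies
above its tangents, the change of `G` is at most `t (αε/n · log t + M)` for a constant `M`: the
entropy of the new entry contributes `t log t`, whose slope is `-∞` at `0`, while every other
term changes at a bounded rate. Hence `G` strictly decreases for small `t`. -/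

open Real Finset Filter Topology

lemma mul_log_div_sub_le {c x y : ℝ} (hc : 0 < c) (hx : 0 ≤ x) (hy : 0 < y) :
    y * log (y / c) - y - (x * log (x / c) - x) ≤ (y - x) * log (y / c) := by
  rcases hx.eq_or_lt with rfl | hx
  · simpa using hy.le
  · have h := one_sub_inv_le_log_of_pos (div_pos hx hy)
    rw [inv_div, log_div hx.ne' hy.ne'] at h
    rw [log_div hx.ne' hc.ne', log_div hy.ne' hc.ne']
    have hxy : x * (1 - y / x) = x - y := by field_simp
    linarith [mul_le_mul_of_nonneg_left h hx.le]

lemma sum_sub_sum_of_eq_off_pair {ι G : Type*} [Fintype ι] [AddCommGroup G] {f g : ι → G}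
    {a b : ι} (hab : a ≠ b) (h : ∀ x, x ≠ a → x ≠ b → f x = g x) :
    ∑ x, f x - ∑ x, g x = (f a - g a) + (f b - g b) := by
  rw [← Finset.sum_sub_distrib]
  exact Fintype.sum_eq_add a b hab fun x hx => sub_eq_zero.2 (h x hx.1 hx.2)

section Transfer

variable {K n : ℕ} (U : Fin K → Fin n → ℝ) (i i₁ : Fin K) (j : Fin n) (t : ℝ)

/-- `U` with mass `t` moved from entry `(i₁, j)` to entry `(i, j)`. -/
def transfer : Fin K → Fin n → ℝ :=
  fun p q =>
    U p q + (Pi.single i t - Pi.single i₁ t : Fin K → ℝ) p * (Pi.single j 1 : Fin n → ℝ) q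

variable {i i₁}

lemma transfer_apply_left (hne : i ≠ i₁) : transfer U i i₁ j t i j = U i j + t := by
  simp [transfer, hne.symm]

lemma transfer_apply_right (hne : i ≠ i₁) : transfer U i i₁ j t i₁ j = U i₁ j - t := by
  simp [transfer, hne.symm, sub_eq_add_neg]

lemma transfer_apply_of_ne {p : Fin K} {q : Fin n} (hi : (p, q) ≠ (i, j))
    (hi₁ : (p, q) ≠ (i₁, j)) : transfer U i i₁ j t p q = U p q := by
  by_cases hq : q = j
  · subst hq
    simp_all [transfer]
  · simp [transfer, hq]

lemma sum_transfer_col (q : Fin n) : ∑ p, transfer U i i₁ j t p q = ∑ p, U p q := by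
  simp [transfer, Finset.sum_add_distrib, ← Finset.sum_mul]

lemma sum_transfer_row (p : Fin K) :
    ∑ q, transfer U i i₁ j t p q
      = ∑ q, U p q + (Pi.single i t - Pi.single i₁ t : Fin K → ℝ) p := by
  simp [transfer, Finset.sum_add_distrib, ← Finset.mul_sum]

lemma sum_sum_comp_transfer_sub (hne : i ≠ i₁) (φ : Fin K → Fin n → ℝ → ℝ) :
    ∑ p, ∑ q, φ p q (transfer U i i₁ j t p q) - ∑ p, ∑ q, φ p q (U p q)
      = (φ i j (U i j + t) - φ i j (U i j))
        + (φ i₁ j (U i₁ j - t) - φ i₁ j (U i₁ j)) := by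
  simp only [← Fintype.sum_prod_type']
  rw [sum_sub_sum_of_eq_off_pair (a := (i, j)) (b := (i₁, j)) (by simpa using hne)
    fun x h h₁ => by rw [transfer_apply_of_ne U j t h h₁]]
  rw [transfer_apply_left U j t hne, transfer_apply_right U j t hne]

end Transfer

section ColSimplex

variable {K n : ℕ} {U : Fin K → Fin n → ℝ}

lemma le_one_of_mem_colSimplexSet (hU : U ∈ colSimplexSet K n) (p : Fin K) (q : Fin n) :
    U p q ≤ 1 :=
  hU.2 q ▸ Finset.single_le_sum (f := fun p => U p q) (fun p _ => hU.1 p q) (Finset.mem_univ p)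

lemma sum_row_le_of_mem_colSimplexSet (hU : U ∈ colSimplexSet K n) (p : Fin K) :
    ∑ q, U p q ≤ n := by
  simpa using Finset.sum_le_sum fun q (_ : q ∈ Finset.univ) => le_one_of_mem_colSimplexSet hU p q

lemma exists_pos_of_mem_colSimplexSet (hU : U ∈ colSimplexSet K n) (q : Fin n) :
    ∃ p, 0 < U p q := by
  by_contra! h
  have := Finset.sum_nonpos fun p (_ : p ∈ Finset.univ) => h p
  linarith [hU.2 q]

lemma transfer_mem_colSimplexSet (hU : U ∈ colSimplexSet K n) {i i₁ : Fin K} (hne : i ≠ i₁)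
    (j : Fin n) {t : ℝ} (ht : 0 ≤ t) (hti : t ≤ U i₁ j) :
    transfer U i i₁ j t ∈ colSimplexSet K n := by
  refine ⟨fun p q => ?_, fun q => (sum_transfer_col U j t q).trans (hU.2 q)⟩
  by_cases hi : (p, q) = (i, j)
  · simp only [Prod.mk.injEq] at hi
    rw [hi.1, hi.2, transfer_apply_left U j t hne]
    linarith [hU.1 i j]
  by_cases hi₁ : (p, q) = (i₁, j)
  · simp only [Prod.mk.injEq] at hi₁
    rw [hi₁.1, hi₁.2, transfer_apply_right U j t hne]
    linarith
  rw [transfer_apply_of_ne U j t hi hi₁]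
  exact hU.1 p q

end ColSimplex

section Estimates

variable {K n : ℕ} {U : Fin K → Fin n → ℝ} {i i₁ : Fin K} {j : Fin n} {t : ℝ}

lemma sum_mul_log_sub_one_transfer_le (hne : i ≠ i₁) (hU : U ∈ colSimplexSet K n)
    (hUij : U i j = 0) (ht : 0 < t) (hta : t ≤ U i₁ j / 2) :
    ∑ p, ∑ q, transfer U i i₁ j t p q * (log (transfer U i i₁ j t p q) - 1)
        - ∑ p, ∑ q, U p q * (log (U p q) - 1)
      ≤ t * log t - t - t * log (U i₁ j / 2) := by
  rw [sum_sum_comp_transfer_sub U j t hne fun _ _ v => v * (log v - 1), hUij, zero_add,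
    zero_mul, sub_zero]
  have hgrad := mul_log_div_sub_le one_pos (hU.1 i₁ j) (show 0 < U i₁ j - t by linarith)
  have hlog : log (U i₁ j / 2) ≤ log (U i₁ j - t) := log_le_log (by linarith) (by linarith)
  simp only [div_one] at hgrad
  linarith [mul_le_mul_of_nonneg_left hlog ht.le]

lemma klv_transfer_sub_le (hne : i ≠ i₁) (hU : U ∈ colSimplexSet K n)
    {z : Fin K → ℝ} (hz : ∀ p, 0 < z p) (ht : 0 < t) (hta : t ≤ U i₁ j / 2) :
    klv (fun p => (∑ q, transfer U i i₁ j t p q) / n) z - klv (fun p => (∑ q, U p q) / n) z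
      ≤ -(t / n * (log (z i) + log (U i₁ j / (2 * n * z i₁)))) := by
  have hn : (0 : ℝ) < n := Nat.cast_pos.2 j.pos
  have hrow := sum_transfer_row (i := i) (i₁ := i₁) U j t
  have hVi : ∑ q, U i q + t ≤ n := by
    have := sum_row_le_of_mem_colSimplexSet (transfer_mem_colSimplexSet hU hne j ht.le
      (by linarith [hU.1 i₁ j])) i
    rwa [hrow, Pi.sub_apply, Pi.single_eq_same, Pi.single_eq_of_ne hne, sub_zero] at this
  unfold klv
  rw [sum_sub_sum_of_eq_off_pair hne fun p hp hp₁ => by simp [hrow, hp, hp₁]]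
  simp only [hrow, Pi.sub_apply, Pi.single_eq_same, Pi.single_eq_of_ne hne,
    Pi.single_eq_of_ne hne.symm, sub_zero, zero_sub, ← sub_eq_add_neg]
  set a := U i₁ j
  set r₀ := ∑ q, U i q
  set r₁ := ∑ q, U i₁ q
  have hr₀ : 0 ≤ r₀ := Finset.sum_nonneg fun q _ => hU.1 i q
  have hr₁ : a ≤ r₁ :=
    Finset.single_le_sum (f := U i₁) (fun q _ => hU.1 i₁ q) (mem_univ j)
  have hgrad₀ := mul_log_div_sub_le (hz i) (div_nonneg hr₀ hn.le)
    (show 0 < (r₀ + t) / n from div_pos (by linarith) hn)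
  have hgrad₁ := mul_log_div_sub_le (hz i₁)
    (show 0 ≤ r₁ / n from div_nonneg (by linarith [hU.1 i₁ j]) hn.le)
    (show 0 < (r₁ - t) / n from div_pos (by linarith) hn)
  have hlog₀ : log ((r₀ + t) / n / z i) ≤ - log (z i) := by
    rw [← log_inv, ← one_div]
    exact log_le_log (div_pos (div_pos (by linarith) hn) (hz i))
      (div_le_div_of_nonneg_right ((div_le_one hn).2 hVi) (hz i).le)
  have hlog₁ : log (a / (2 * n * z i₁)) ≤ log ((r₁ - t) / n / z i₁) := by
    rw [div_div, mul_assoc, ← div_div]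
    have hz₁ := hz i₁
    have ha : 0 < a := by linarith
    exact log_le_log (by positivity) (div_le_div_of_nonneg_right (by linarith) (by positivity))
  have ht₀ : 0 ≤ t / n := by positivity
  rw [show (r₀ + t) / n - r₀ / n = t / n by ring] at hgrad₀
  rw [show (r₁ - t) / n - r₁ / n = -(t / n) by ring] at hgrad₁
  linarith [mul_le_mul_of_nonneg_left hlog₀ ht₀, mul_le_mul_of_nonneg_left hlog₁ ht₀]

end Estimates

lemma frob_transfer {K n : ℕ} (C U : Fin K → Fin n → ℝ) {i i₁ : Fin K} (hne : i ≠ i₁)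
    (j : Fin n) (t : ℝ) :
    frob C (transfer U i i₁ j t) = frob C U + t * (C i j - C i₁ j) := by
  have h := sum_sum_comp_transfer_sub U j t hne fun p q v => C p q * v
  unfold frob
  linarith

section Objective

variable {K n : ℕ} {C : Fin K → Fin n → ℝ} {z : Fin K → ℝ} {α ε : ℝ}
  {U : Fin K → Fin n → ℝ} {i i₁ : Fin K} {j : Fin n}

lemma exists_objG_transfer_sub_le (hne : i ≠ i₁) (hU : U ∈ colSimplexSet K n)
    (hUij : U i j = 0) (hz : ∀ p, 0 < z p) (hα0 : 0 ≤ α) (hα1 : α ≤ 1) (hε : 0 ≤ ε) :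
    ∃ M, ∀ t, 0 < t → t ≤ U i₁ j / 2 →
      objG C z α ε (transfer U i i₁ j t) - objG C z α ε U
        ≤ t * (α * ε / n * log t + M) := by
  refine ⟨α / n * (C i j - C i₁ j - ε * (1 + log (U i₁ j / 2)))
    - (1 - α) / n * (log (z i) + log (U i₁ j / (2 * n * z i₁))), fun t ht hta => ?_⟩
  have hent := sum_mul_log_sub_one_transfer_le hne hU hUij ht hta
  have hkl := klv_transfer_sub_le hne hU hz ht hta
  have hαn : 0 ≤ α / n := by positivity
  unfold objG matEnt
  rw [frob_transfer C U hne]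
  linear_combination mul_le_mul_of_nonneg_left hent (mul_nonneg hαn hε)
    + mul_le_mul_of_nonneg_left hkl (sub_nonneg.2 hα1)

end Objective

lemma exists_objG_lt_of_eq_zero {K n : ℕ} {C : Fin K → Fin n → ℝ} {z : Fin K → ℝ}
    {α ε : ℝ} {U : Fin K → Fin n → ℝ} (hU : U ∈ colSimplexSet K n) {i : Fin K}
    {j : Fin n}
    (hUij : U i j = 0) (hz : ∀ p, 0 < z p) (hα0 : 0 < α) (hα1 : α ≤ 1) (hε : 0 < ε) :
    ∃ V ∈ colSimplexSet K n, objG C z α ε V < objG C z α ε U := by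
  obtain ⟨i₁, hi₁⟩ := exists_pos_of_mem_colSimplexSet hU j
  have hne : i ≠ i₁ := by rintro rfl; linarith
  obtain ⟨M, hM⟩ := exists_objG_transfer_sub_le (C := C) hne hU hUij hz hα0.le hα1 hε.le
  have hn : (0 : ℝ) < n := Nat.cast_pos.2 j.pos
  have hlog : Tendsto (fun t => α * ε / n * log t + M) (𝓝[>] 0) atBot :=
    tendsto_atBot_add_const_right _ M (tendsto_log_nhdsGT_zero.const_mul_atBot (by positivity))
  obtain ⟨t, ⟨ht, hta⟩, hneg⟩ := (Filter.Eventually.and (Ioo_mem_nhdsGT (half_pos hi₁))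
    (hlog.eventually (eventually_lt_atBot 0))).exists
  refine ⟨transfer U i i₁ j t, transfer_mem_colSimplexSet hU hne j ht.le (by linarith), ?_⟩
  linarith [hM t ht hta.le, mul_neg_of_pos_of_neg ht hneg]

theorem minimizer_pos_entries_general
    {K n : ℕ}
    (C : Fin K → Fin n → ℝ)
    (z : Fin K → ℝ) (hzpos : ∀ i, 0 < z i)
    (α ε : ℝ) (hα0 : 0 < α) (hα1 : α < 1) (hε : 0 < ε)
    (Ustar : Fin K → Fin n → ℝ) (hUfeas : Ustar ∈ colSimplexSet K n)
    (hUmin : ∀ V ∈ colSimplexSet K n, objG C z α ε Ustar ≤ objG C z α ε V) :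
    ∀ i j, 0 < Ustar i j := by
  intro i j
  refine (hUfeas.1 i j).lt_of_ne' fun hzero => ?_
  obtain ⟨V, hV, hlt⟩ := exists_objG_lt_of_eq_zero hUfeas hzero hzpos hα0 hα1.le hε
  exact (hUmin V hV).not_gt hlt

/-- The (unique) minimizer of the entropic objective `G` over the set of
nonnegative matrices with columns in the simplex has strictly positive entries. -/
theorem minimizer_pos_entries
    {K n : ℕ} (hK : 1 ≤ K) (hn : 1 ≤ n)
    (C : Fin K → Fin n → ℝ)
    (z : Fin K → ℝ) (hzpos : ∀ i, 0 < z i) (hzsum : ∑ i, z i = 1)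
    (α ε : ℝ) (hα0 : 0 < α) (hα1 : α < 1) (hε : 0 < ε)
    (Ustar : Fin K → Fin n → ℝ) (hUfeas : Ustar ∈ colSimplexSet K n)
    (hUmin : ∀ V ∈ colSimplexSet K n, objG C z α ε Ustar ≤ objG C z α ε V) :
    ∀ i j, 0 < Ustar i j :=
  minimizer_pos_entries_general C z hzpos α ε hα0 hα1 hε Ustar hUfeas hUmin
end

section
/- Let K = 2, n ≥ 1, let f_1,…,f_n ∈ Δ_2 have strictly positive entries, let 0 ≤ α ≤ 1, and let d : Δ_2 × Δ_2 → ℝ be any function. For an assignment t ∈ {1,2}^n define the combinatorial objective J(t) = -(α/n) Σ_{j=1}^n log (f_j)_{t_j} + (1-α) d((1/n) Σ_{j=1}^n e(t_j), z), where z ∈ Δ_2 is fixed. Then there exists a minimizer t* of J over {1,2}^n that is a threshold assignment with respect to the values (f_j)_2: for all indices j, j′, if t*_j = 2 and t*_{j′} = 1 then (f_j)_2 ≥ (f_{j′})_2. Equivalently, for some m ∈ {0,1,…,n}, t* assigns class 2 to m indices with the m largest values of (f_j)_2 - (f_j)_1 and class 1 to the rest. -/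
/-!
Among the minimizers of `J`, take one that maximizes the log-likelihood `∑ log (f_j)_{t_j}`.
Swapping the classes of two indices leaves the class proportions, hence the `d`-term, unchanged,
while swapping a misordered pair (class 2 at `j`, class 1 at `j'`, `(f_j)_2 < (f_{j'})_2`)
strictly increases the log-likelihood and so does not increase `J`: this contradicts the choice.
-/

/-- One-hot encoding of a class `i ∈ {1,2}` (represented by `Fin 2`,
with class 1 ↦ `0` and class 2 ↦ `1`). -/
noncomputable def oneHot2 (i : Fin 2) : Fin 2 → ℝ := fun k => if k = i then 1 else 0

/-- The combinatorial bag objective in the binary case: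
`J(t) = -(α/n) ∑_j log (f_j)_{t_j} + (1-α) d((1/n) ∑_j e(t_j), z)`. -/
noncomputable def binObj {n : ℕ} (f : Fin n → Fin 2 → ℝ) (z : Fin 2 → ℝ)
    (α : ℝ) (d : (Fin 2 → ℝ) → (Fin 2 → ℝ) → ℝ) (t : Fin n → Fin 2) : ℝ :=
  -(α / n) * ∑ j, Real.log (f j (t j))
    + (1 - α) * d (fun k => (∑ j, oneHot2 (t j) k) / n) z

theorem Finite.exists_min_maximizing_among_min {α β γ : Type*} [Finite α] [Nonempty α]
    [LinearOrder β] [LinearOrder γ] (J : α → β) (L : α → γ) :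
    ∃ a, (∀ b, J a ≤ J b) ∧ ∀ b, J b ≤ J a → L b ≤ L a := by
  obtain ⟨a, ha⟩ := Finite.exists_min fun a => toLex (J a, OrderDual.toDual (L a))
  refine ⟨a, fun b => ?_, fun b hb => ?_⟩
  · rcases Prod.Lex.le_iff.mp (ha b) with h | h
    exacts [h.le, h.1.le]
  · rcases Prod.Lex.le_iff.mp (ha b) with h | h
    exacts [absurd hb (not_le.mpr h), h.2]

theorem Fintype.sum_comp_swap {ι α M : Type*} [Fintype ι] [DecidableEq ι] [AddCommGroup M]
    (g : ι → α → M) (t : ι → α) {j j' : ι} (h : j ≠ j') :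
    ∑ i, g i (t (Equiv.swap j j' i)) =
      ∑ i, g i (t i) + (g j (t j') - g j (t j)) + (g j' (t j) - g j' (t j')) := by
  have hdiff : ∑ i, (g i (t (Equiv.swap j j' i)) - g i (t i)) =
      (g j (t j') - g j (t j)) + (g j' (t j) - g j' (t j')) := by
    rw [Fintype.sum_eq_add j j' h fun i hi => by
      rw [Equiv.swap_apply_of_ne_of_ne hi.1 hi.2, sub_self]]
    simp
  rw [Finset.sum_sub_distrib] at hdiff
  rw [add_assoc, ← hdiff, add_sub_cancel]

variable {n : ℕ} {f : Fin n → Fin 2 → ℝ}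

noncomputable def logLik (f : Fin n → Fin 2 → ℝ) (t : Fin n → Fin 2) : ℝ :=
  ∑ j, Real.log (f j (t j))

theorem binObj_comp_perm_le (z : Fin 2 → ℝ) {α : ℝ} (hα : 0 ≤ α)
    (d : (Fin 2 → ℝ) → (Fin 2 → ℝ) → ℝ) {t : Fin n → Fin 2} (σ : Equiv.Perm (Fin n))
    (h : logLik f t ≤ logLik f (t ∘ σ)) :
    binObj f z α d (t ∘ σ) ≤ binObj f z α d t := by
  have hcount : (fun k => (∑ j, oneHot2 ((t ∘ σ) j) k) / n) =
      fun k => (∑ j, oneHot2 (t j) k) / n := by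
    funext k
    exact congrArg (· / (n : ℝ)) (Equiv.sum_comp σ fun j => oneHot2 (t j) k)
  have hαn : 0 ≤ α / n := by positivity
  unfold binObj
  rw [hcount]
  unfold logLik at h
  linarith [mul_le_mul_of_nonneg_left h hαn]

theorem logLik_lt_logLik_comp_swap (hfpos : ∀ j k, 0 < f j k)
    (hfsum : ∀ j, f j 0 + f j 1 = 1) {t : Fin n → Fin 2} {j j' : Fin n} (hne : j ≠ j')
    (hj : t j = 1) (hj' : t j' = 0) (hlt : f j 1 < f j' 1) :
    logLik f t < logLik f (t ∘ Equiv.swap j j') := by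
  have h1 : Real.log (f j 1) < Real.log (f j' 1) := Real.log_lt_log (hfpos j 1) hlt
  have h0 : Real.log (f j' 0) < Real.log (f j 0) :=
    Real.log_lt_log (hfpos j' 0) (by linarith [hfsum j, hfsum j'])
  unfold logLik
  rw [Function.comp_def, Fintype.sum_comp_swap (fun i k => Real.log (f i k)) t hne, hj, hj']
  linarith

theorem binary_threshold_minimizer_general
    {n : ℕ}
    (f : Fin n → Fin 2 → ℝ)
    (hfpos : ∀ j k, 0 < f j k) (hfsum : ∀ j, f j 0 + f j 1 = 1)
    (z : Fin 2 → ℝ)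
    (α : ℝ) (hα0 : 0 ≤ α)
    (d : (Fin 2 → ℝ) → (Fin 2 → ℝ) → ℝ) :
    ∃ tstar : Fin n → Fin 2,
      (∀ t : Fin n → Fin 2, binObj f z α d tstar ≤ binObj f z α d t) ∧
      ∀ j j' : Fin n, tstar j = 1 → tstar j' = 0 → f j' 1 ≤ f j 1 := by
  obtain ⟨t, hmin, hmax⟩ := Finite.exists_min_maximizing_among_min (binObj f z α d) (logLik f)
  refine ⟨t, hmin, fun j j' hj hj' => ?_⟩
  by_contra! hlt
  have hne : j ≠ j' := by
    rintro rfl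
    simp [hj] at hj'
  have hL := logLik_lt_logLik_comp_swap hfpos hfsum hne hj hj' hlt
  exact (hmax _ (binObj_comp_perm_le z hα0 d _ hL.le)).not_gt hL

/-- In the binary classification case, the combinatorial bag objective admits a
minimizer which is a threshold assignment with respect to the values `(f_j)_2`:
whenever `t* j` is class 2 (`1 : Fin 2`) and `t* j'` is class 1 (`0 : Fin 2`),
one has `(f_{j'})_2 ≤ (f_j)_2`. -/
theorem binary_threshold_minimizer
    {n : ℕ} (hn : 1 ≤ n)
    (f : Fin n → Fin 2 → ℝ)
    (hfpos : ∀ j k, 0 < f j k) (hfsum : ∀ j, f j 0 + f j 1 = 1)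
    (z : Fin 2 → ℝ) (hznn : ∀ k, 0 ≤ z k) (hzsum : z 0 + z 1 = 1)
    (α : ℝ) (hα0 : 0 ≤ α) (hα1 : α ≤ 1)
    (d : (Fin 2 → ℝ) → (Fin 2 → ℝ) → ℝ) :
    ∃ tstar : Fin n → Fin 2,
      (∀ t : Fin n → Fin 2, binObj f z α d tstar ≤ binObj f z α d t) ∧
      ∀ j j' : Fin n, tstar j = 1 → tstar j' = 0 → f j' 1 ≤ f j 1 :=
  binary_threshold_minimizer_general f hfpos hfsum z α hα0 d
end
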